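/- Let (X, P_X), (Y, P_Y), (Z, P_Z) be finite metric measure spaces equipped with m-pointed partitions, with μ_X, μ_Y, μ_Z fully supported. Let μ^{XY} ∈ C_{P_X,P_Y}(μ_X, μ_Y) and μ^{YZ} ∈ C_{P_Y,P_Z}(μ_Y, μ_Z) be quantization couplings. Then the glued measure μ^{XZ}(x,z) := Σ_{y ∈ Y} μ^{XY}(x,y) μ^{YZ}(y,z) / μ_Y(y) is a quantization coupling: μ^{XZ} ∈ C_{P_X,P_Z}(μ_X, μ_Z). -/

import Mathlib

open Finset

noncomputable section

/-- A probability vector on a finite type. -/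
def IsProb {X : Type*} [Fintype X] (μ : X → ℝ) : Prop :=
  (∀ x, 0 ≤ μ x) ∧ (∑ x, μ x) = 1

/-- `μ` is a coupling of the probability vectors `μX` and `μY`. -/
def IsCoupling {X Y : Type*} [Fintype X] [Fintype Y]
    (μX : X → ℝ) (μY : Y → ℝ) (μ : X → Y → ℝ) : Prop :=
  (∀ x y, 0 ≤ μ x y) ∧ (∀ x, (∑ y, μ x y) = μX x) ∧ (∀ y, (∑ x, μ x y) = μY y)

/-- The Gromov–Wasserstein loss of a coupling, for given distance functions. -/
def GWLoss {X Y : Type*} [Fintype X] [Fintype Y]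
    (dX : X → X → ℝ) (dY : Y → Y → ℝ) (μ : X → Y → ℝ) : ℝ :=
  ∑ x, ∑ y, ∑ x', ∑ y', (dX x x' - dY y y') ^ 2 * μ x y * μ x' y'

/-- The Gromov–Wasserstein distance between two finite mm-spaces. -/
def dGW {X Y : Type*} [Fintype X] [Fintype Y]
    (dX : X → X → ℝ) (dY : Y → Y → ℝ) (μX : X → ℝ) (μY : Y → ℝ) : ℝ :=
  sInf {r : ℝ | ∃ μ, IsCoupling μX μY μ ∧ r = Real.sqrt (GWLoss dX dY μ)}

/-- An `m`-pointed partition of `X`: each point is assigned to one of `m` blocks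
(`part`), and each block `p` has a distinguished representative `rep p` lying in it.
Blocks are the fibers of `part`; they are disjoint, cover `X`, and are nonempty. -/
structure PointedPartition (X : Type*) (m : ℕ) where
  part : X → Fin m
  rep : Fin m → X
  part_rep : ∀ p, part (rep p) = p

/-- The mass `μ_X(Uᵖ)` of the block `Uᵖ`; as a function of `p` this is the measure
`μ_{P_X}` of the quantized representation `Xᵐ` (identified with `Fin m`). -/
def blockMass {X : Type*} [Fintype X] (μX : X → ℝ) {m : ℕ}
    (P : PointedPartition X m) (p : Fin m) : ℝ :=
  ∑ x, if P.part x = p then μX x else 0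

/-- The normalized measure `μ_{Uᵖ} = μ_X|_{Uᵖ} / μ_X(Uᵖ)` of a block, extended by zero
to all of `X` (this is `μ̄_{Uᵖ}`). -/
def blockMeasure {X : Type*} [Fintype X] (μX : X → ℝ) {m : ℕ}
    (P : PointedPartition X m) (p : Fin m) (x : X) : ℝ :=
  if P.part x = p then μX x / blockMass μX P p else 0

/-- `μ` is a quantization coupling: `μ(x,y) = Σ_{p,q} μm(xᵖ,y^q) μ̄_{xᵖ,y^q}(x,y)` where
`μm` couples the quantized measures and each `ν p q` is (the extension by zero of) a
coupling of the block measures with `ν p q (xᵖ, y^q) > 0`. -/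
def IsQuantCoupling {X Y : Type*} [Fintype X] [Fintype Y] {m : ℕ}
    (μX : X → ℝ) (μY : Y → ℝ)
    (PX : PointedPartition X m) (PY : PointedPartition Y m)
    (μ : X → Y → ℝ) : Prop :=
  ∃ (μm : Fin m → Fin m → ℝ) (ν : Fin m → Fin m → X → Y → ℝ),
    IsCoupling (blockMass μX PX) (blockMass μY PY) μm ∧
    (∀ p q, IsCoupling (blockMeasure μX PX p) (blockMeasure μY PY q) (ν p q)) ∧
    (∀ p q, 0 < ν p q (PX.rep p) (PY.rep q)) ∧
    (∀ x y, μ x y = ∑ p, ∑ q, μm p q * ν p q x y)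

/-- The quantized Gromov–Wasserstein distance between `m`-pointed mm-spaces. -/
def dqGW {X Y : Type*} [Fintype X] [Fintype Y] {m : ℕ}
    (dX : X → X → ℝ) (dY : Y → Y → ℝ) (μX : X → ℝ) (μY : Y → ℝ)
    (PX : PointedPartition X m) (PY : PointedPartition Y m) : ℝ :=
  sInf {r : ℝ | ∃ μ, IsQuantCoupling μX μY PX PY μ ∧ r = Real.sqrt (GWLoss dX dY μ)}

/-- The quantized eccentricity `q(P_X) = (Σ_p μ_X(Uᵖ) s_{Uᵖ}(xᵖ)²)^{1/2}`, where
`s_{Uᵖ}(xᵖ)² = Σ_{x ∈ Uᵖ} d_X(xᵖ,x)² μ_{Uᵖ}(x)`. -/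
def qEcc {X : Type*} [Fintype X] (dX : X → X → ℝ) (μX : X → ℝ) {m : ℕ}
    (P : PointedPartition X m) : ℝ :=
  Real.sqrt (∑ p, blockMass μX P p * ∑ x, dX (P.rep p) x ^ 2 * blockMeasure μX P p x)

/-- The `m`-quantized eccentricity `q_m(X)`: minimum of `q(P_X)` over `m`-pointed
partitions. -/
def qEccMin (X : Type*) [Fintype X] (dX : X → X → ℝ) (μX : X → ℝ) (m : ℕ) : ℝ :=
  sInf {r : ℝ | ∃ P : PointedPartition X m, r = qEcc dX μX P}

end

/-!
When gluing, only block couplings through the same block `V^q` of `Y` interact, since each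
vanishes off its block. Hence `μ^{XZ} = Σ_{p,r} Σ_q c_{pqr} ν_{pqr}`, where `ν_{pqr}` glues the
`(p,q)` and `(q,r)` block couplings along `μ_{V^q}` and
`c_{pqr} = μ_m(xᵖ,y^q) μ_m(y^q,z^r) / μ_Y(V^q)`. Summed over `q`, the weights form the gluing of
the two quantized couplings, and the normalized mixture of the `ν_{pqr}` is a block coupling
of `U^p` and `W^r`; it is positive at `(xᵖ, z^r)` because each `ν_{pqr}` is, by its `y = y^q`
term.
-/

section Coupling

variable {X Y Z : Type*} [Fintype X] [Fintype Y] [Fintype Z]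
  {α : X → ℝ} {β : Y → ℝ} {γ : Z → ℝ} {ν : X → Y → ℝ}

theorem IsCoupling.right_nonneg (h : IsCoupling α β ν) (y : Y) : 0 ≤ β y := by
  rw [← h.2.2 y]
  exact sum_nonneg fun x _ => h.1 x y

theorem IsCoupling.le_right (h : IsCoupling α β ν) (x : X) (y : Y) : ν x y ≤ β y := by
  rw [← h.2.2 y]
  exact single_le_sum (fun x' _ => h.1 x' y) (mem_univ x)

theorem IsCoupling.eq_zero_of_left_eq_zero (h : IsCoupling α β ν) {x : X} (hx : α x = 0)
    (y : Y) : ν x y = 0 := by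
  rw [← h.2.1 x] at hx
  exact (sum_eq_zero_iff_of_nonneg fun y _ => h.1 x y).1 hx y (mem_univ y)

theorem IsCoupling.eq_zero_of_right_eq_zero (h : IsCoupling α β ν) {y : Y} (hy : β y = 0)
    (x : X) : ν x y = 0 := by
  rw [← h.2.2 y] at hy
  exact (sum_eq_zero_iff_of_nonneg fun x _ => h.1 x y).1 hy x (mem_univ x)

theorem isCoupling_mul (hα : IsProb α) (hβ : IsProb β) :
    IsCoupling α β fun x y => α x * β y :=
  ⟨fun x y => mul_nonneg (hα.1 x) (hβ.1 y),
    fun x => by rw [← mul_sum, hβ.2, mul_one],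
    fun y => by rw [← sum_mul, hα.2, one_mul]⟩

/-- For couplings through `β`, the terms with `β y = 0` vanish, so the junk value `t / 0 = 0`
is harmless. -/
noncomputable def glue (β : Y → ℝ) (ν₁ : X → Y → ℝ) (ν₂ : Y → Z → ℝ) (x : X) (z : Z) : ℝ :=
  ∑ y, ν₁ x y * ν₂ y z / β y

theorem isCoupling_glue {ν₁ : X → Y → ℝ} {ν₂ : Y → Z → ℝ}
    (h₁ : IsCoupling α β ν₁) (h₂ : IsCoupling β γ ν₂) : IsCoupling α γ (glue β ν₁ ν₂) := by
  refine ⟨fun x z => sum_nonneg fun y _ =>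
    div_nonneg (mul_nonneg (h₁.1 x y) (h₂.1 y z)) (h₁.right_nonneg y), fun x => ?_, fun z => ?_⟩
  · calc ∑ z, glue β ν₁ ν₂ x z = ∑ y, ν₁ x y * β y / β y := by
          simp only [glue]
          rw [sum_comm]
          simp only [← sum_div, ← mul_sum, h₂.2.1]
      _ = α x := by
          rw [← h₁.2.1 x]
          refine sum_congr rfl fun y _ => ?_
          rcases eq_or_ne (β y) 0 with hy | hy
          · rw [h₁.eq_zero_of_right_eq_zero hy, zero_mul, zero_div]
          · exact mul_div_cancel_right₀ _ hy
  · calc ∑ x, glue β ν₁ ν₂ x z = ∑ y, β y * ν₂ y z / β y := by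
          simp only [glue]
          rw [sum_comm]
          simp only [← sum_div, ← sum_mul, h₁.2.2]
      _ = γ z := by
          rw [← h₂.2.2 z]
          refine sum_congr rfl fun y _ => ?_
          rcases eq_or_ne (β y) 0 with hy | hy
          · rw [h₂.eq_zero_of_left_eq_zero hy, mul_zero, zero_div]
          · exact mul_div_cancel_left₀ _ hy

theorem glue_pos {ν₁ : X → Y → ℝ} {ν₂ : Y → Z → ℝ}
    (h₁ : IsCoupling α β ν₁) (h₂ : IsCoupling β γ ν₂) {x : X} {y : Y} {z : Z}
    (hxy : 0 < ν₁ x y) (hyz : 0 < ν₂ y z) : 0 < glue β ν₁ ν₂ x z :=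
  lt_of_lt_of_le (div_pos (mul_pos hxy hyz) (hxy.trans_le (h₁.le_right x y)))
    (single_le_sum (f := fun y => ν₁ x y * ν₂ y z / β y)
      (fun y _ => div_nonneg (mul_nonneg (h₁.1 x y) (h₂.1 y z)) (h₁.right_nonneg y))
      (mem_univ y))

end Coupling

section Mixture

variable {X Y ι : Type*} [Fintype ι] {w : ι → ℝ} {κ : ι → X → Y → ℝ} {κ₀ : X → Y → ℝ}

noncomputable def normalizedMixture (w : ι → ℝ) (κ : ι → X → Y → ℝ) (κ₀ : X → Y → ℝ)
    (x : X) (y : Y) : ℝ :=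
  if ∑ i, w i = 0 then κ₀ x y else (∑ i, w i * κ i x y) / ∑ i, w i

theorem isCoupling_normalizedMixture [Fintype X] [Fintype Y] {α : X → ℝ} {β : Y → ℝ}
    (hw : ∀ i, 0 ≤ w i) (hκ : ∀ i, IsCoupling α β (κ i)) (hκ₀ : IsCoupling α β κ₀) :
    IsCoupling α β (normalizedMixture w κ κ₀) := by
  unfold normalizedMixture
  split_ifs with hW
  · exact hκ₀
  refine ⟨fun x y => div_nonneg (sum_nonneg fun i _ => mul_nonneg (hw i) ((hκ i).1 x y))
    (sum_nonneg fun i _ => hw i), fun x => ?_, fun y => ?_⟩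
  · rw [← sum_div, sum_comm]
    simp only [← mul_sum, (hκ _).2.1, ← sum_mul]
    exact mul_div_cancel_left₀ _ hW
  · rw [← sum_div, sum_comm]
    simp only [← mul_sum, (hκ _).2.2, ← sum_mul]
    exact mul_div_cancel_left₀ _ hW

theorem sum_mul_eq_mul_normalizedMixture (hw : ∀ i, 0 ≤ w i) (x : X) (y : Y) :
    ∑ i, w i * κ i x y = (∑ i, w i) * normalizedMixture w κ κ₀ x y := by
  unfold normalizedMixture
  split_ifs with hW
  · have hw0 := (sum_eq_zero_iff_of_nonneg fun i _ => hw i).1 hW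
    rw [hW, zero_mul]
    exact sum_eq_zero fun i hi => by rw [hw0 i hi, zero_mul]
  · exact (mul_div_cancel₀ _ hW).symm

theorem normalizedMixture_pos (hw : ∀ i, 0 ≤ w i) {x : X} {y : Y} (hκ : ∀ i, 0 < κ i x y)
    (hκ₀ : 0 < κ₀ x y) : 0 < normalizedMixture w κ κ₀ x y := by
  unfold normalizedMixture
  split_ifs with hW
  · exact hκ₀
  obtain ⟨i, -, hi⟩ := exists_ne_zero_of_sum_ne_zero hW
  have hwi : 0 < w i := (hw i).lt_of_ne' hi
  exact div_pos (sum_pos' (fun j _ => mul_nonneg (hw j) (hκ j).le)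
    ⟨i, mem_univ i, mul_pos hwi (hκ i)⟩) ((sum_nonneg fun j _ => hw j).lt_of_ne' hW)

end Mixture

section Blocks

variable {X : Type*} [Fintype X] {μ : X → ℝ} {m : ℕ} (P : PointedPartition X m)

theorem blockMass_pos (hμ : ∀ x, 0 < μ x) (p : Fin m) : 0 < blockMass μ P p :=
  (hμ (P.rep p)).trans_le <| by
    simpa [blockMass, P.part_rep p] using
      single_le_sum (f := fun x => if P.part x = p then μ x else 0)
        (fun x _ => by split_ifs; exacts [(hμ x).le, le_rfl]) (mem_univ (P.rep p))

theorem blockMeasure_rep_pos (hμ : ∀ x, 0 < μ x) (p : Fin m) :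
    0 < blockMeasure μ P p (P.rep p) := by
  rw [blockMeasure, if_pos (P.part_rep p)]
  exact div_pos (hμ _) (blockMass_pos P hμ p)

theorem isProb_blockMeasure (hμ : ∀ x, 0 < μ x) (p : Fin m) : IsProb (blockMeasure μ P p) := by
  refine ⟨fun x => ?_, ?_⟩
  · unfold blockMeasure
    split_ifs
    exacts [div_nonneg (hμ x).le (blockMass_pos P hμ p).le, le_rfl]
  · have hdiv : ∀ x, blockMeasure μ P p x = (if P.part x = p then μ x else 0) / blockMass μ P p :=
      fun x => by unfold blockMeasure; split_ifs <;> simp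
    rw [sum_congr rfl fun x _ => hdiv x, ← sum_div]
    exact div_self (blockMass_pos P hμ p).ne'

theorem blockMeasure_eq_zero_of_part_ne {p : Fin m} {x : X} (h : P.part x ≠ p) :
    blockMeasure μ P p x = 0 :=
  if_neg h

theorem blockMass_mul_blockMeasure {x : X} (h : blockMass μ P (P.part x) ≠ 0) :
    blockMass μ P (P.part x) * blockMeasure μ P (P.part x) x = μ x := by
  rw [blockMeasure, if_pos rfl, mul_div_cancel₀ _ h]

end Blocks

theorem glue_sum_blocks {X Y Z ι κ : Type*} [Fintype X] [Fintype Y] [Fintype Z]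
    [Fintype ι] [Fintype κ] {m : ℕ} {μY : Y → ℝ} (hμY : ∀ y, 0 < μY y)
    (PY : PointedPartition Y m) {α : ι → X → ℝ} {γ : κ → Z → ℝ}
    {μ₁ : ι → Fin m → ℝ} {μ₂ : Fin m → κ → ℝ}
    {ν₁ : ι → Fin m → X → Y → ℝ} {ν₂ : Fin m → κ → Y → Z → ℝ}
    (h₁ : ∀ p q, IsCoupling (α p) (blockMeasure μY PY q) (ν₁ p q))
    (h₂ : ∀ q r, IsCoupling (blockMeasure μY PY q) (γ r) (ν₂ q r)) (x : X) (z : Z) :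
    glue μY (fun x y => ∑ p, ∑ q, μ₁ p q * ν₁ p q x y)
        (fun y z => ∑ q, ∑ r, μ₂ q r * ν₂ q r y z) x z =
      ∑ p, ∑ r, ∑ q, μ₁ p q * μ₂ q r / blockMass μY PY q *
        glue (blockMeasure μY PY q) (ν₁ p q) (ν₂ q r) x z := by
  have hν₁ : ∀ p q y, PY.part y ≠ q → ν₁ p q x y = 0 := fun p q y hy =>
    (h₁ p q).eq_zero_of_right_eq_zero (blockMeasure_eq_zero_of_part_ne PY hy) x
  have hν₂ : ∀ q r y, PY.part y ≠ q → ν₂ q r y z = 0 := fun q r y hy =>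
    (h₂ q r).eq_zero_of_left_eq_zero (blockMeasure_eq_zero_of_part_ne PY hy) z
  -- only `q = PY.part y` contributes, and there `μY y = blockMass * blockMeasure`
  have hterm : ∀ y p r, (∑ q, μ₁ p q * ν₁ p q x y) * (∑ q, μ₂ q r * ν₂ q r y z) / μY y =
      ∑ q, μ₁ p q * μ₂ q r / blockMass μY PY q *
        (ν₁ p q x y * ν₂ q r y z / blockMeasure μY PY q y) := by
    intro y p r
    have hsingle {f : Fin m → ℝ} (hf : ∀ q, PY.part y ≠ q → f q = 0) :
        ∑ q, f q = f (PY.part y) :=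
      sum_eq_single _ (fun q _ hq => hf q (Ne.symm hq)) (absurd (mem_univ _))
    rw [hsingle fun q hq => by rw [hν₁ p q y hq, mul_zero],
      hsingle fun q hq => by rw [hν₂ q r y hq, mul_zero],
      hsingle fun q hq => by rw [hν₁ p q y hq, zero_mul, zero_div, mul_zero],
      ← blockMass_mul_blockMeasure PY (blockMass_pos PY hμY (PY.part y)).ne']
    ring
  calc glue μY (fun x y => ∑ p, ∑ q, μ₁ p q * ν₁ p q x y)
        (fun y z => ∑ q, ∑ r, μ₂ q r * ν₂ q r y z) x z
      = ∑ y, ∑ p, ∑ r, (∑ q, μ₁ p q * ν₁ p q x y) * (∑ q, μ₂ q r * ν₂ q r y z) / μY y := by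
        refine sum_congr rfl fun y _ => ?_
        beta_reduce
        rw [sum_comm (f := fun q r => μ₂ q r * ν₂ q r y z), sum_mul_sum]
        simp only [sum_div]
    _ = ∑ y, ∑ p, ∑ r, ∑ q, μ₁ p q * μ₂ q r / blockMass μY PY q *
          (ν₁ p q x y * ν₂ q r y z / blockMeasure μY PY q y) := by
        simp only [hterm]
    _ = ∑ p, ∑ r, ∑ q, μ₁ p q * μ₂ q r / blockMass μY PY q *
          glue (blockMeasure μY PY q) (ν₁ p q) (ν₂ q r) x z := by
        simp only [glue, mul_sum]
        rw [sum_comm]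
        refine sum_congr rfl fun p _ => ?_
        rw [sum_comm]
        exact sum_congr rfl fun r _ => sum_comm

theorem glued_quantization_coupling_general
    {X Y Z : Type*} [Fintype X] [Fintype Y] [Fintype Z] {m : ℕ}
    (μX : X → ℝ) (μY : Y → ℝ) (μZ : Z → ℝ)
    (hXpos : ∀ x, 0 < μX x) (hYpos : ∀ y, 0 < μY y) (hZpos : ∀ z, 0 < μZ z)
    (PX : PointedPartition X m) (PY : PointedPartition Y m) (PZ : PointedPartition Z m)
    (μXY : X → Y → ℝ) (μYZ : Y → Z → ℝ)
    (hXY : IsQuantCoupling μX μY PX PY μXY)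
    (hYZ : IsQuantCoupling μY μZ PY PZ μYZ) :
    IsQuantCoupling μX μZ PX PZ (fun x z => ∑ y, μXY x y * μYZ y z / μY y) := by
  obtain ⟨μ₁, ν₁, hμ₁, hν₁, hν₁_rep, hXY⟩ := hXY
  obtain ⟨μ₂, ν₂, hμ₂, hν₂, hν₂_rep, hYZ⟩ := hYZ
  obtain rfl : μXY = fun x y => ∑ p, ∑ q, μ₁ p q * ν₁ p q x y := funext₂ hXY
  obtain rfl : μYZ = fun y z => ∑ q, ∑ r, μ₂ q r * ν₂ q r y z := funext₂ hYZ
  have hw : ∀ p r q, 0 ≤ μ₁ p q * μ₂ q r / blockMass μY PY q := fun p r q =>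
    div_nonneg (mul_nonneg (hμ₁.1 p q) (hμ₂.1 q r)) (hμ₁.right_nonneg q)
  refine ⟨glue (blockMass μY PY) μ₁ μ₂, fun p r => normalizedMixture
      (fun q => μ₁ p q * μ₂ q r / blockMass μY PY q)
      (fun q => glue (blockMeasure μY PY q) (ν₁ p q) (ν₂ q r))
      (fun x z => blockMeasure μX PX p x * blockMeasure μZ PZ r z),
    isCoupling_glue hμ₁ hμ₂, fun p r => ?_, fun p r => ?_, fun x z => ?_⟩
  · exact isCoupling_normalizedMixture (hw p r) (fun q => isCoupling_glue (hν₁ p q) (hν₂ q r))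
      (isCoupling_mul (isProb_blockMeasure PX hXpos p) (isProb_blockMeasure PZ hZpos r))
  · exact normalizedMixture_pos (hw p r)
      (fun q => glue_pos (hν₁ p q) (hν₂ q r) (hν₁_rep p q) (hν₂_rep q r))
      (mul_pos (blockMeasure_rep_pos PX hXpos p) (blockMeasure_rep_pos PZ hZpos r))
  · exact (glue_sum_blocks hYpos PY hν₁ hν₂ x z).trans <| sum_congr rfl fun p _ =>
      sum_congr rfl fun r _ => sum_mul_eq_mul_normalizedMixture (hw p r) x z

/-- gluing two quantization couplings along `Y` yields a quantization
coupling of `X` and `Z`. -/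
theorem glued_quantization_coupling
    {X Y Z : Type*} [Fintype X] [Fintype Y] [Fintype Z]
    [MetricSpace X] [MetricSpace Y] [MetricSpace Z] {m : ℕ}
    (μX : X → ℝ) (μY : Y → ℝ) (μZ : Z → ℝ)
    (hμX : IsProb μX) (hμY : IsProb μY) (hμZ : IsProb μZ)
    (hXpos : ∀ x, 0 < μX x) (hYpos : ∀ y, 0 < μY y) (hZpos : ∀ z, 0 < μZ z)
    (PX : PointedPartition X m) (PY : PointedPartition Y m) (PZ : PointedPartition Z m)
    (μXY : X → Y → ℝ) (μYZ : Y → Z → ℝ)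
    (hXY : IsQuantCoupling μX μY PX PY μXY)
    (hYZ : IsQuantCoupling μY μZ PY PZ μYZ) :
    IsQuantCoupling μX μZ PX PZ (fun x z => ∑ y, μXY x y * μYZ y z / μY y) :=
  glued_quantization_coupling_general μX μY μZ hXpos hYpos hZpos PX PY PZ μXY μYZ hXY hYZ
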